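/- Let U, V ⊆ ℝ^e be open and H : U → V a bi-Lipschitz C¹ bijection, and let G : V → ℝ^n be C¹ with e ≤ n. Then for all x ∈ U, J_e(G ∘ H)(x) = J_e(G)(H(x)) · |det(DH(x))|, where J_e(F)(x) denotes the square root of the sum of squares of all e×e minors of the Jacobian matrix of F at x. -/

import Mathlib

/-!
The chain rule makes the Jacobian matrix of `G ∘ H` at `x` the product `DG(H x) · DH(x)`.
Since `DH(x)` is square, every `e × e` minor of this product is the corresponding minor of
`DG(H x)` times `det DH(x)`, so the sum of squared minors picks up the factor `det DH(x) ^ 2`.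
-/

open MeasureTheory Set ENNReal Matrix
noncomputable section

abbrev E (n : ℕ) := EuclideanSpace ℝ (Fin n)

/-- The Jacobian matrix of a map G : ℝ^e → ℝ^n at x, as an n × e matrix. -/
def jacMatrix {e n : ℕ} (G : E e → E n) (x : E e) : Matrix (Fin n) (Fin e) ℝ :=
  fun i j => fderiv ℝ G x (EuclideanSpace.single j (1 : ℝ)) i

/-- J_e G(x): the square root of the sum of the squares of all e × e minors
of the Jacobian matrix of G at x. -/
def jacobian {e n : ℕ} (G : E e → E n) (x : E e) : ℝ :=
  Real.sqrt (∑ s : {s : Finset (Fin n) // s.card = e},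
    (Matrix.det ((jacMatrix G x).submatrix (s.1.orderEmbOfFin s.2) id)) ^ 2)

theorem jacMatrix_eq_toMatrix_fderiv {e n : ℕ} (G : E e → E n) (x : E e) :
    jacMatrix G x = LinearMap.toMatrix (EuclideanSpace.basisFun (Fin e) ℝ).toBasis
      (EuclideanSpace.basisFun (Fin n) ℝ).toBasis (fderiv ℝ G x) := by
  ext i j
  simp [jacMatrix, LinearMap.toMatrix_apply]

theorem jacMatrix_comp {e m n : ℕ} {G : E m → E n} {H : E e → E m} {x : E e}
    (hG : DifferentiableAt ℝ G (H x)) (hH : DifferentiableAt ℝ H x) :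
    jacMatrix (G ∘ H) x = jacMatrix G (H x) * jacMatrix H x := by
  simp only [jacMatrix_eq_toMatrix_fderiv, fderiv_comp x hG hH, ← LinearMap.toMatrix_comp]
  rfl

theorem sum_sq_det_submatrix_mul {R : Type*} [CommRing R] {n e : ℕ}
    (A : Matrix (Fin n) (Fin e) R) (B : Matrix (Fin e) (Fin e) R) :
    ∑ s : {s : Finset (Fin n) // s.card = e},
        ((A * B).submatrix (s.1.orderEmbOfFin s.2) id).det ^ 2 =
      (∑ s : {s : Finset (Fin n) // s.card = e},
        (A.submatrix (s.1.orderEmbOfFin s.2) id).det ^ 2) * B.det ^ 2 := by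
  simp only [submatrix_mul _ _ _ id _ Function.bijective_id, submatrix_id_id, det_mul, mul_pow,
    Finset.sum_mul]

theorem jacobian_comp_eq_mul_abs_det {e n : ℕ} {G : E e → E n} {H : E e → E e} {x : E e}
    (hG : DifferentiableAt ℝ G (H x)) (hH : DifferentiableAt ℝ H x) :
    jacobian (G ∘ H) x = jacobian G (H x) * |(jacMatrix H x).det| := by
  rw [jacobian, jacobian, jacMatrix_comp hG hH, sum_sq_det_submatrix_mul,
    Real.sqrt_mul (by positivity), Real.sqrt_sq_eq_abs]

theorem stmt11 (e n : ℕ)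
    (U V : Set (E e)) (hU : IsOpen U) (hV : IsOpen V)
    (H : E e → E e) (hHb : Set.BijOn H U V) (hHc : ContDiffOn ℝ 1 H U)
    (G : E e → E n) (hG : ContDiffOn ℝ 1 G V) :
    ∀ x ∈ U, jacobian (G ∘ H) x =
      jacobian G (H x) * |Matrix.det (jacMatrix H x)| := by
  intro x hx
  have hHx : DifferentiableAt ℝ H x :=
    (hHc.contDiffAt (hU.mem_nhds hx)).differentiableAt one_ne_zero
  have hGHx : DifferentiableAt ℝ G (H x) :=
    (hG.contDiffAt (hV.mem_nhds (hHb.mapsTo hx))).differentiableAt one_ne_zero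
  exact jacobian_comp_eq_mul_abs_det hGHx hHx
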